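/- The differential operators L_m := Σ_{ℓ≥0} ((2ℓ+1)/2)(t_ℓ - 2δ_{ℓ,0}) ∂/∂t_{ℓ+m} + (1/4) Σ_{ℓ=0}^{m-1} ∂²/∂t_ℓ ∂t_{m-1-ℓ} + ((1-4ν²)/16) δ_{m,0}, for m ≥ 0, satisfy the Virasoro commutation relations [L_m, L_n] = (m-n) L_{m+n} for all m, n ≥ 0. -/

import Mathlib

/-!
Write `L_m = D_m + ¼ Q_m + c δ_{m,0}`, where `D_m` is the derivation with
`D_m t_i = ((2(i-m)+1)/2) (t_{i-m} - 2δ_{i,m})` for `i ≥ m` (and `0` for `i < m`) and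
`Q_m = Σ_{ℓ<m} ∂_ℓ ∂_{m-1-ℓ}`, and compute in the ring of linear endomorphisms.
A bracket of derivations is a derivation, so `[D_m, D_n] = (m-n) D_{m+n}` only has to be checked
on the generators `t_i`. The `∂_ℓ` commute, so `[Q_m, Q_n] = 0`, and `[∂_j, D_m] = ((2j+1)/2) ∂_{j+m}`
gives `[Q_n, D_m] = Σ_{ℓ<n} (2ℓ+1) ∂_{ℓ+m} ∂_{n-1-ℓ}`. In the mixed terms
`[D_m, Q_n] + [Q_m, D_n]` the coefficients of `∂_k ∂_{m+n-1-k}` and of its mirror image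
`∂_{m+n-1-k} ∂_k` add up to `2(m-n)`, which yields `(m-n) Q_{m+n}`. The constant is central, and
`(m-n) δ_{m+n,0} = 0`.
-/

open MvPolynomial

/-- The Virasoro operator `L_m` acting on polynomials in the variables `t_0, t_1, t_2, ...`
(represented as `MvPolynomial ℕ ℝ`):
`L_m = Σ_{ℓ≥0} ((2ℓ+1)/2)(t_ℓ - 2δ_{ℓ,0}) ∂/∂t_{ℓ+m}
      + (1/4) Σ_{ℓ=0}^{m-1} ∂²/∂t_ℓ∂t_{m-1-ℓ} + ((1-4ν²)/16) δ_{m,0}`. -/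
noncomputable def virasoroL (ν : ℝ) (m : ℕ) (p : MvPolynomial ℕ ℝ) : MvPolynomial ℕ ℝ :=
  (∑ᶠ ℓ : ℕ, ((2 * (ℓ : ℝ) + 1) / 2) •
      ((X ℓ - if ℓ = 0 then 2 else 0) * pderiv (ℓ + m) p))
  + (1 / 4 : ℝ) • ∑ ℓ ∈ Finset.range m, pderiv ℓ (pderiv (m - 1 - ℓ) p)
  + (if m = 0 then ((1 - 4 * ν ^ 2) / 16 : ℝ) • p else 0)

open Finset

theorem Derivation.sum_apply {R A M ι : Type*} [CommSemiring R] [CommSemiring A] [Algebra R A]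
    [AddCommMonoid M] [Module A M] [Module R M] (s : Finset ι) (D : ι → Derivation R A M)
    (a : A) :
    (∑ i ∈ s, D i) a = ∑ i ∈ s, D i a := by
  show Derivation.coeFnAddMonoidHom (∑ i ∈ s, D i) a = _
  rw [map_sum, Finset.sum_apply]
  rfl

namespace MvPolynomial

variable {R σ : Type*}

theorem derivation_eq_sum_mul_pderiv [CommSemiring R]
    (D : Derivation R (MvPolynomial σ R) (MvPolynomial σ R)) {s : Finset σ}
    {p : MvPolynomial σ R} (hs : p.vars ⊆ s) :
    D p = ∑ i ∈ s, D (X i) * pderiv i p := by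
  classical
  have : D p = (∑ i ∈ s, D (X i) • pderiv i) p :=
    derivation_eq_of_forall_mem_vars fun i hi => by
      simp [Derivation.sum_apply, pderiv_X, Pi.single_apply, hs hi]
  simp [this, Derivation.sum_apply]

theorem pderiv_lie_mkDerivation [CommRing R] (j : σ) (f : σ → MvPolynomial σ R) :
    ⁅pderiv (R := R) j, mkDerivation R f⁆ = mkDerivation R fun i => pderiv j (f i) := by
  classical
  refine derivation_ext fun i => ?_
  rcases eq_or_ne i j with rfl | h <;>
    simp [Derivation.commutator_apply, mkDerivation_X, pderiv_X, *]

theorem commute_pderiv [CommRing R] (i j : σ) :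
    Commute (pderiv (R := R) i : Module.End R (MvPolynomial σ R)) (pderiv (R := R) j) := by
  classical
  have : ⁅pderiv (R := R) i, pderiv j⁆ = (0 : Derivation R (MvPolynomial σ R) _) :=
    derivation_ext fun k => by
      simp [Derivation.commutator_apply, pderiv_X, Pi.single_apply, apply_ite]
  rw [commute_iff_lie_eq, ← Derivation.commutator_coe_linear_map, this]
  rfl

end MvPolynomial

section RangeSums

variable {K M : Type*}

theorem sum_range_smul_eq_of_add_reflect [Field K] [CharZero K] [AddCommGroup M] [Module K M]
    (g : ℕ → M) (h : ℕ → K) (c : K) (N : ℕ)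
    (hg : ∀ i < N, g (N - 1 - i) = g i) (hh : ∀ i < N, h i + h (N - 1 - i) = 2 * c) :
    ∑ i ∈ range N, h i • g i = c • ∑ i ∈ range N, g i := by
  refine smul_right_injective M (two_ne_zero (α := K)) ?_
  calc (2 : K) • ∑ i ∈ range N, h i • g i
      = ∑ i ∈ range N, h i • g i + ∑ i ∈ range N, h (N - 1 - i) • g (N - 1 - i) := by
        rw [two_smul, sum_range_reflect (fun i => h i • g i)]
    _ = ∑ i ∈ range N, (2 * c) • g i := by
        rw [← sum_add_distrib]
        refine sum_congr rfl fun i hi => ?_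
        rw [hg i (mem_range.1 hi), ← add_smul, hh i (mem_range.1 hi)]
    _ = (2 : K) • c • ∑ i ∈ range N, g i := by rw [smul_smul, smul_sum]

theorem sum_range_smul_shift [Semiring K] [AddCommMonoid M] [Module K M] (g : ℕ → M)
    (c : ℕ → K) (m n : ℕ) :
    ∑ ℓ ∈ range n, c ℓ • g (ℓ + m)
      = ∑ i ∈ range (m + n), (if m ≤ i then c (i - m) else 0) • g i := by
  have hlow : ∑ i ∈ range m, (if m ≤ i then c (i - m) else 0) • g i = 0 :=
    sum_eq_zero fun i hi => by rw [if_neg (by simpa using hi), zero_smul]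
  rw [sum_range_add, hlow, zero_add]
  refine sum_congr rfl fun ℓ _ => ?_
  rw [if_pos (Nat.le_add_right m ℓ), Nat.add_sub_cancel_left, Nat.add_comm]

theorem sum_range_odd_smul_sub [Field K] [CharZero K] [AddCommGroup M] [Module K M]
    (g : ℕ → M) (m n : ℕ) (hg : ∀ i < m + n, g (m + n - 1 - i) = g i) :
    ∑ ℓ ∈ range m, (2 * ℓ + 1 : K) • g (ℓ + n) - ∑ ℓ ∈ range n, (2 * ℓ + 1 : K) • g (ℓ + m)
      = ((m : K) - n) • ∑ i ∈ range (m + n), g i := by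
  rw [sum_range_smul_shift, sum_range_smul_shift, Nat.add_comm n m, ← sum_sub_distrib]
  simp_rw [← sub_smul]
  refine sum_range_smul_eq_of_add_reflect g _ _ _ hg fun i hi => ?_
  have hcast : ((m + n - 1 - i : ℕ) : K) = m + n - 1 - i := by
    rw [Nat.cast_sub (by omega), Nat.cast_sub (by omega)]; push_cast; ring
  split_ifs <;> first | omega | (push_cast [Nat.cast_sub, hcast, *]; ring)

end RangeSums

theorem Ring.mul_lie {A : Type*} [Ring A] (a b c : A) : ⁅a * b, c⁆ = a * ⁅b, c⁆ + ⁅a, c⁆ * b := by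
  simp only [Ring.lie_def]; noncomm_ring

noncomputable section

namespace Virasoro

local notation "𝒫" => MvPolynomial ℕ ℝ

def shiftedVar (ℓ : ℕ) : 𝒫 := X ℓ - if ℓ = 0 then 2 else 0

theorem map_shiftedVar (D : Derivation ℝ 𝒫 𝒫) (ℓ : ℕ) : D (shiftedVar ℓ) = D (X ℓ) := by
  have h2 : D 2 = 0 := D.map_natCast 2
  unfold shiftedVar
  split_ifs <;> simp [h2]

def weight (ℓ : ℕ) : ℝ := (2 * ℓ + 1) / 2

-- Given by its values on the generators rather than as the `finsum` in `virasoroL`, so that it is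
-- a derivation by construction; `firstOrder_eq_finsum` identifies the two.
def firstOrder (m : ℕ) : Derivation ℝ 𝒫 𝒫 :=
  mkDerivation ℝ fun i => if m ≤ i then weight (i - m) • shiftedVar (i - m) else 0

theorem firstOrder_X (m i : ℕ) :
    firstOrder m (X i) = if m ≤ i then weight (i - m) • shiftedVar (i - m) else 0 :=
  mkDerivation_X _ _ _

theorem lie_firstOrder (m n : ℕ) :
    ⁅firstOrder m, firstOrder n⁆ = ((m : ℝ) - n) • firstOrder (m + n) := by
  refine derivation_ext fun i => ?_
  simp only [Derivation.commutator_apply, Derivation.smul_apply, firstOrder_X, apply_ite,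
    Derivation.map_smul, map_shiftedVar, map_zero, smul_zero]
  split_ifs <;> try omega
  · rw [smul_smul, smul_smul, smul_smul, show i - n - m = i - (m + n) by omega,
      show i - m - n = i - (m + n) by omega, ← sub_smul]
    congr 1
    simp only [weight]
    push_cast [Nat.cast_sub (by omega : m ≤ i), Nat.cast_sub (by omega : n ≤ i),
      Nat.cast_sub (by omega : m + n ≤ i)]
    ring
  all_goals simp

theorem pderiv_lie_firstOrder (j m : ℕ) :
    ⁅pderiv (R := ℝ) j, firstOrder m⁆ = weight j • pderiv (j + m) := by
  rw [firstOrder, pderiv_lie_mkDerivation]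
  refine derivation_ext fun i => ?_
  simp only [mkDerivation_X, apply_ite, Derivation.map_smul, map_shiftedVar, map_zero,
    Derivation.smul_apply, pderiv_X, Pi.single_apply]
  split_ifs <;> first | omega | simp_all

theorem firstOrder_eq_finsum (m : ℕ) (p : 𝒫) :
    firstOrder m p = ∑ᶠ ℓ : ℕ, weight ℓ • (shiftedVar ℓ * pderiv (ℓ + m) p) := by
  obtain ⟨M, hM⟩ := p.vars.exists_nat_subset_range
  have hsupp :
      (Function.support fun ℓ => weight ℓ • (shiftedVar ℓ * pderiv (ℓ + m) p)) ⊆ range M := by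
    refine fun ℓ hℓ => by_contra fun hℓM => hℓ ?_
    have : ℓ + m ∉ p.vars := fun h => hℓM <| by
      have := mem_range.1 (hM h)
      simp only [coe_range, Set.mem_Iio]
      omega
    simp [pderiv_eq_zero_of_notMem_vars this]
  rw [derivation_eq_sum_mul_pderiv _ (hM.trans (range_subset_range.2 (Nat.le_add_left M m))),
    sum_range_add, sum_eq_zero fun i hi => ?_, zero_add, finsum_eq_sum_of_support_subset _ hsupp]
  · refine sum_congr rfl fun ℓ _ => ?_
    rw [firstOrder_X, if_pos (Nat.le_add_right m ℓ), Nat.add_sub_cancel_left, smul_mul_assoc,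
      Nat.add_comm]
  · rw [firstOrder_X, if_neg (by simpa using hi), zero_mul]

local notation "𝔡" i:max => (pderiv (R := ℝ) i : Module.End ℝ 𝒫)

theorem lie_pderiv_firstOrder (j m : ℕ) :
    ⁅𝔡 j, (firstOrder m : Module.End ℝ 𝒫)⁆ = weight j • 𝔡 (j + m) := by
  rw [← Derivation.commutator_coe_linear_map, pderiv_lie_firstOrder, Derivation.coe_smul_linearMap]

def secondOrder (n : ℕ) : Module.End ℝ 𝒫 := ∑ ℓ ∈ range n, 𝔡 ℓ * 𝔡 (n - 1 - ℓ)

theorem commute_secondOrder (m n : ℕ) : Commute (secondOrder m) (secondOrder n) :=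
  Commute.sum_left _ _ _ fun _ _ => Commute.sum_right _ _ _ fun _ _ =>
    ((commute_pderiv _ _).mul_right (commute_pderiv _ _)).mul_left
      ((commute_pderiv _ _).mul_right (commute_pderiv _ _))

theorem lie_secondOrder_firstOrder (n m : ℕ) :
    ⁅secondOrder n, (firstOrder m : Module.End ℝ 𝒫)⁆
      = ∑ ℓ ∈ range n, (2 * ℓ + 1 : ℝ) • (𝔡 (ℓ + m) * 𝔡 (n - 1 - ℓ)) := by
  calc ⁅secondOrder n, (firstOrder m : Module.End ℝ 𝒫)⁆
      = ∑ ℓ ∈ range n, weight ℓ • (𝔡 (ℓ + m) * 𝔡 (n - 1 - ℓ))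
        + ∑ ℓ ∈ range n, weight (n - 1 - ℓ) • (𝔡 ℓ * 𝔡 (n - 1 - ℓ + m)) := by
        rw [secondOrder, Ring.lie_def, sum_mul, mul_sum, ← sum_sub_distrib, ← sum_add_distrib]
        refine sum_congr rfl fun ℓ _ => ?_
        rw [← Ring.lie_def, Ring.mul_lie, lie_pderiv_firstOrder, lie_pderiv_firstOrder,
          mul_smul_comm, smul_mul_assoc, add_comm]
    _ = ∑ ℓ ∈ range n, weight ℓ • (𝔡 (ℓ + m) * 𝔡 (n - 1 - ℓ))
        + ∑ ℓ ∈ range n, weight ℓ • (𝔡 (ℓ + m) * 𝔡 (n - 1 - ℓ)) := by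
        rw [← sum_range_reflect _ n]
        congr 1
        refine sum_congr rfl fun ℓ hℓ => ?_
        rw [Nat.sub_sub_self (by simp at hℓ; omega), (commute_pderiv _ _).eq]
    _ = _ := by
        rw [← sum_add_distrib]
        refine sum_congr rfl fun ℓ _ => ?_
        rw [← add_smul, weight]
        ring_nf

theorem lie_secondOrder_sub (m n : ℕ) :
    ⁅secondOrder m, (firstOrder n : Module.End ℝ 𝒫)⁆
        - ⁅secondOrder n, (firstOrder m : Module.End ℝ 𝒫)⁆
      = ((m : ℝ) - n) • secondOrder (m + n) := by
  have key := sum_range_odd_smul_sub (K := ℝ) (fun i => 𝔡 i * 𝔡 (m + n - 1 - i)) m n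
    fun i hi => by
      simp only [Nat.sub_sub_self (by omega : i ≤ m + n - 1), (commute_pderiv _ _).eq]
  simp only [show ∀ ℓ, m + n - 1 - (ℓ + n) = m - 1 - ℓ from fun ℓ => by omega,
    show ∀ ℓ, m + n - 1 - (ℓ + m) = n - 1 - ℓ from fun ℓ => by omega] at key
  rw [lie_secondOrder_firstOrder, lie_secondOrder_firstOrder, key, secondOrder]

def operator (ν : ℝ) (m : ℕ) : Module.End ℝ 𝒫 :=
  (firstOrder m : Module.End ℝ 𝒫) + (1 / 4 : ℝ) • secondOrder m
    + (if m = 0 then (1 - 4 * ν ^ 2) / 16 else 0 : ℝ) • 1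

theorem lie_operator (ν : ℝ) (m n : ℕ) :
    ⁅operator ν m, operator ν n⁆ = ((m : ℝ) - n) • operator ν (m + n) := by
  have hD : ⁅(firstOrder m : Module.End ℝ 𝒫), (firstOrder n : Module.End ℝ 𝒫)⁆
      = ((m : ℝ) - n) • (firstOrder (m + n) : Module.End ℝ 𝒫) := by
    rw [← Derivation.commutator_coe_linear_map, lie_firstOrder, Derivation.coe_smul_linearMap]
  have hQD := lie_secondOrder_sub m n
  have hQ := (commute_secondOrder m n).eq
  have hc : ((m : ℝ) - n) * (if m + n = 0 then (1 - 4 * ν ^ 2) / 16 else 0) = 0 := by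
    split_ifs with h
    · simp [show m = 0 by omega, show n = 0 by omega]
    · exact mul_zero _
  simp only [operator, Ring.lie_def] at hD hQD ⊢
  simp only [add_mul, mul_add, smul_mul_assoc, mul_smul_comm, one_mul, mul_one]
  linear_combination (norm := module)
    hD + (1 / 4 : ℝ) • hQD + (1 / 16 : ℝ) • hQ - hc • (1 : Module.End ℝ 𝒫)

theorem virasoroL_eq_operator (ν : ℝ) (m : ℕ) (p : 𝒫) : virasoroL ν m p = operator ν m p := by
  simp only [operator, LinearMap.add_apply, LinearMap.smul_apply, Derivation.coeFn_coe,
    firstOrder_eq_finsum, secondOrder, LinearMap.sum_apply, Module.End.mul_apply,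
    Module.End.one_apply]
  split_ifs <;> simp [virasoroL, weight, shiftedVar, *]

end Virasoro

end

/-- The operators `L_m` satisfy the Virasoro commutation relations
`[L_m, L_n] = (m - n) L_{m+n}` for all `m, n ≥ 0`. -/
theorem virasoro_commutation (ν : ℝ) (m n : ℕ) (p : MvPolynomial ℕ ℝ) :
    virasoroL ν m (virasoroL ν n p) - virasoroL ν n (virasoroL ν m p)
      = ((m : ℝ) - (n : ℝ)) • virasoroL ν (m + n) p := by
  simp only [Virasoro.virasoroL_eq_operator]
  rw [← Module.End.mul_apply, ← Module.End.mul_apply, ← LinearMap.sub_apply, ← Ring.lie_def,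
    Virasoro.lie_operator, LinearMap.smul_apply]
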